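/- arXiv:math/0408257 — 2 statements merged into one kernel-verified Lean document; each statement's English description precedes it below -/
import Mathlib

section
/- Let T be a real polynomial of degree d ≥ 2, let 0 ≤ ε ≤ d−1, and let J, J̃ be Jacobi matrices. For z ∈ ℂ let D_z ∈ ℂ[X] be the unique polynomial with T(X) − T(z) = (X − z)·D_z(X), so that D_z(J) = (T(z)·1 − T(J))·(z·1 − J)^{−1} whenever z is outside the spectrum of J. Then J solves the Renormalization Equation RE(ε, J̃; T) if and only if both of the following hold: (i) V_ε* ∘ T(J) = J̃ ∘ V_ε* (where T(J) denotes the polynomial functional calculus applied to J), and (ii) V_ε* ∘ D_z(J) ∘ V_ε = (T'(z)/d)·Id for every z ∈ ℂ. -/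
open Polynomial ContinuousLinearMap

noncomputable section

/-- ℓ²(ℤ): square-summable complex sequences indexed by ℤ. -/
abbrev H2 : Type := lp (fun _ : ℤ => ℂ) 2

/-- The standard orthonormal basis vector `e_k` of ℓ²(ℤ). -/
def eB (k : ℤ) : H2 := lp.single 2 k 1

/-- `J` is the Jacobi matrix with coefficient sequences `p` (off-diagonal, positive
bounded) and `q` (diagonal, real bounded). -/
def IsJacobi (J : H2 →L[ℂ] H2) (p q : ℤ → ℝ) : Prop :=
  IsSelfAdjoint J ∧ (∀ k, 0 < p k) ∧ (∃ C, ∀ k, p k ≤ C) ∧ (∃ C, ∀ k, |q k| ≤ C) ∧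
  (∀ k : ℤ, (inner ℂ (eB (k + 1)) (J (eB k)) : ℂ) = (p (k + 1) : ℂ)) ∧
  (∀ k : ℤ, (inner ℂ (eB k) (J (eB k)) : ℂ) = (q k : ℂ)) ∧
  (∀ j k : ℤ, 1 < |j - k| → (inner ℂ (eB j) (J (eB k)) : ℂ) = 0)

/-- `J` is a Jacobi matrix (for some coefficient sequences). -/
def IsJacobiOp (J : H2 →L[ℂ] H2) : Prop := ∃ p q, IsJacobi J p q

/-- `S` is the bilateral shift: `S e_k = e_{k+1}`. -/
def IsShift (S : H2 ≃ₗᵢ[ℂ] H2) : Prop := ∀ k : ℤ, S (eB k) = eB (k + 1)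

/-- Conjugation `S^{-k} J S^{k}` by an integer power of the shift. -/
def conjOp (S : H2 ≃ₗᵢ[ℂ] H2) (k : ℤ) (J : H2 →L[ℂ] H2) : H2 →L[ℂ] H2 :=
  ((S ^ (-k)).toLinearIsometry.toContinuousLinearMap) ∘L J ∘L
    ((S ^ k).toLinearIsometry.toContinuousLinearMap)

/-- `V` is the isometry `V_ε : e_k ↦ e_{ε + d k}`. -/
def IsVmap (d ε : ℤ) (V : H2 →L[ℂ] H2) : Prop := ∀ k : ℤ, V (eB k) = eB (ε + d * k)

/-- A real polynomial viewed as a complex polynomial. -/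
def Tc (T : Polynomial ℝ) : Polynomial ℂ := T.map (algebraMap ℝ ℂ)

/-- `J` solves the Renormalization Equation `RE(ε, J̃; T)`:
`V_ε^* (z - J)⁻¹ V_ε = (T'(z)/d) (T(z) - J̃)⁻¹` for all admissible `z`. -/
def SolvesRE (d ε : ℤ) (T : Polynomial ℝ) (J Jt : H2 →L[ℂ] H2) : Prop :=
  ∀ V : H2 →L[ℂ] H2, IsVmap d ε V →
    ∀ z : ℂ, z ∉ spectrum ℂ J → (Tc T).eval z ∉ spectrum ℂ Jt →
      (adjoint V) ∘L (resolvent J z) ∘L V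
        = (((Tc (derivative T)).eval z) / (d : ℂ)) • resolvent Jt ((Tc T).eval z)

/-- The spectrum of `J` is contained in the real set `s`. -/
def SpecIn (J : H2 →L[ℂ] H2) (s : Set ℝ) : Prop :=
  spectrum ℂ J ⊆ (fun x : ℝ => (x : ℂ)) '' s

/-- The spectrum of `J` is contained in `T⁻¹([-ξ, ξ]) = {z ∈ ℂ : T(z) ∈ [-ξ, ξ]}`. -/
def SpecInPre (T : Polynomial ℝ) (ξ : ℝ) (J : H2 →L[ℂ] H2) : Prop :=
  spectrum ℂ J ⊆ {z : ℂ | ∃ x : ℝ, x ∈ Set.Icc (-ξ) ξ ∧ (Tc T).eval z = (x : ℂ)}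

/-- `T` is a monic real polynomial of degree ≥ 2 which is ξ-expanding: `T'` has
`d - 1` distinct real roots and `|T(c)| > ξ` at every root `c` of `T'`. -/
def Expanding (ξ : ℝ) (T : Polynomial ℝ) : Prop :=
  T.Monic ∧ 2 ≤ T.natDegree ∧
  T.derivative.roots.toFinset.card = T.natDegree - 1 ∧
  ∀ c ∈ T.derivative.roots, ξ < |T.eval c|

/-- Maximum of `f` over the critical points (roots of `T'`). -/
def maxRoots (T : Polynomial ℝ) (f : ℝ → ℝ) : ℝ := sSup (f '' {c : ℝ | c ∈ T.derivative.roots})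

/-- The polynomial `D_z` with `T(X) - T(z) = (X - z) · D_z(X)`. -/
def Dz (T : Polynomial ℝ) (z : ℂ) : Polynomial ℂ :=
  (Tc T - Polynomial.C ((Tc T).eval z)) /ₘ (Polynomial.X - Polynomial.C z)

/-! ### Auxiliary lemmas -/

namespace REaux

open Filter Topology

local notation "⟪" x ", " y "⟫" => (inner ℂ x y : ℂ)

abbrev OpA := H2 →L[ℂ] H2

lemma eB_smul (k : ℤ) (c : ℂ) : (lp.single 2 k c : H2) = c • eB k := by
  rw [eB, ← lp.single_smul, smul_eq_mul, mul_one]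

lemma op_ext {A B : H2 →L[ℂ] H2} (h : ∀ k : ℤ, A (eB k) = B (eB k)) : A = B := by
  refine ContinuousLinearMap.ext fun x => ?_
  have hx : HasSum (fun k : ℤ => (lp.single 2 k (x k) : H2)) x :=
    lp.hasSum_single (by norm_num) x
  have hA := hx.mapL A
  have hB := hx.mapL B
  refine hA.unique ?_
  have he : ∀ k : ℤ, A (lp.single 2 k (x k)) = B (lp.single 2 k (x k)) := fun k => by
    rw [eB_smul, map_smul, map_smul, h]
  simpa only [he] using hB

lemma inner_eB (k : ℤ) (x : H2) : ⟪eB k, x⟫ = x k := by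
  rw [eB, lp.inner_single_left]
  simp [RCLike.inner_apply]

lemma vec_ext {x y : H2} (h : ∀ k : ℤ, ⟪eB k, x⟫ = ⟪eB k, y⟫) : x = y := by
  apply lp.ext
  funext k
  have := h k
  rwa [inner_eB, inner_eB] at this

lemma op_ext_inner {A B : H2 →L[ℂ] H2}
    (h : ∀ j k : ℤ, ⟪eB j, A (eB k)⟫ = ⟪eB j, B (eB k)⟫) : A = B :=
  op_ext fun k => vec_ext fun j => h j k

instance : Nontrivial H2 := by
  refine ⟨eB 0, 0, fun h => ?_⟩
  have h1 : (eB 0) (0 : ℤ) = (1 : ℂ) := lp.single_apply_self 2 0 1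
  rw [h] at h1
  simp at h1

lemma exists_cofactor (T : Polynomial ℝ) :
    ∃ E : Polynomial (Polynomial ℂ), ∀ z : ℂ,
      Tc T - Polynomial.C ((Tc T).eval z) = (X - Polynomial.C z) * E.eval (Polynomial.C z) := by
  have hroot : IsRoot (Polynomial.C (Tc T) - (Tc T).map (Polynomial.C : ℂ →+* Polynomial ℂ)) X := by
    simp [IsRoot, eval_map, eval₂_C_X]
  obtain ⟨E0, hE0⟩ := dvd_iff_isRoot.mpr hroot
  refine ⟨-E0, fun z => ?_⟩
  have h2 := congrArg (Polynomial.eval (Polynomial.C z : Polynomial ℂ)) hE0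
  simp only [eval_mul, eval_sub, eval_C, eval_X, eval_map, Polynomial.eval₂_at_apply] at h2
  rw [eval_neg]
  rw [h2]
  ring

lemma Dz_eq {T : Polynomial ℝ} {E : Polynomial (Polynomial ℂ)}
    (hE : ∀ z : ℂ, Tc T - Polynomial.C ((Tc T).eval z)
      = (X - Polynomial.C z) * E.eval (Polynomial.C z)) (z : ℂ) :
    Dz T z = E.eval (Polynomial.C z) := by
  rw [Dz, hE z, Polynomial.mul_divByMonic_cancel_left _ (monic_X_sub_C z)]

lemma aeval_evalC (J : H2 →L[ℂ] H2) (E : Polynomial (Polynomial ℂ)) (z : ℂ) :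
    aeval J (E.eval (Polynomial.C z)) =
      ∑ j ∈ Finset.range (E.natDegree + 1), z ^ j • aeval J (E.coeff j) := by
  rw [eval_eq_sum_range, map_sum]
  refine Finset.sum_congr rfl fun j _ => ?_
  rw [map_mul, map_pow, aeval_C, ← map_pow, ← Algebra.commutes, ← Algebra.smul_def]

lemma res_right {a : OpA} {z : ℂ} (h : z ∉ spectrum ℂ a) :
    (algebraMap ℂ OpA z - a) * resolvent a z = 1 :=
  Ring.mul_inverse_cancel _ (spectrum.notMem_iff.mp h)

lemma res_left {a : OpA} {z : ℂ} (h : z ∉ spectrum ℂ a) :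
    resolvent a z * (algebraMap ℂ OpA z - a) = 1 :=
  Ring.inverse_mul_cancel _ (spectrum.notMem_iff.mp h)

lemma JR {a : OpA} {z : ℂ} (h : z ∉ spectrum ℂ a) :
    a * resolvent a z = z • resolvent a z - 1 := by
  have h1 : a * resolvent a z
      = algebraMap ℂ OpA z * resolvent a z - (algebraMap ℂ OpA z - a) * resolvent a z := by
    noncomm_ring
  rw [res_right h, ← Algebra.smul_def] at h1
  exact h1

lemma Dz_res {T : Polynomial ℝ} {E : Polynomial (Polynomial ℂ)}
    (hE : ∀ z : ℂ, Tc T - Polynomial.C ((Tc T).eval z)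
      = (X - Polynomial.C z) * E.eval (Polynomial.C z))
    {J : OpA} {z : ℂ} (hz : z ∉ spectrum ℂ J) :
    aeval J (Dz T z)
      = (algebraMap ℂ OpA ((Tc T).eval z) - aeval J (Tc T)) * resolvent J z := by
  have h1 : aeval J (Tc T) - algebraMap ℂ OpA ((Tc T).eval z)
      = (J - algebraMap ℂ OpA z) * aeval J (Dz T z) := by
    have h0 := congrArg (aeval J (R := ℂ)) (hE z)
    rw [map_sub, aeval_C, map_mul, map_sub, aeval_X, aeval_C, ← Dz_eq hE z] at h0
    exact h0
  have hcomm : (algebraMap ℂ OpA z - J) * aeval J (Dz T z)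
      = aeval J (Dz T z) * (algebraMap ℂ OpA z - J) := by
    have h2 : (Commute (aeval J (Polynomial.C z - X)) (aeval J (Dz T z))) :=
      (Commute.all _ _).map (aeval J (R := ℂ))
    rwa [map_sub, aeval_C, aeval_X] at h2
  calc aeval J (Dz T z)
      = aeval J (Dz T z) * ((algebraMap ℂ OpA z - J) * resolvent J z) := by
        rw [res_right hz, mul_one]
    _ = ((algebraMap ℂ OpA z - J) * aeval J (Dz T z)) * resolvent J z := by
        rw [hcomm, mul_assoc]
    _ = (algebraMap ℂ OpA ((Tc T).eval z) - aeval J (Tc T)) * resolvent J z := by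
        rw [show (algebraMap ℂ OpA z - J) * aeval J (Dz T z)
            = -((J - algebraMap ℂ OpA z) * aeval J (Dz T z)) by noncomm_ring, ← h1]
        noncomm_ring

lemma coe_tendsto_cobounded :
    Tendsto (fun t : ℝ => (t : ℂ)) atTop (Bornology.cobounded ℂ) := by
  rw [← tendsto_norm_atTop_iff_cobounded]
  simpa using tendsto_abs_atTop_atTop

lemma res_tendsto (J : OpA) :
    Tendsto (fun t : ℝ => resolvent J ((t : ℂ))) atTop (𝓝 0) :=
  (spectrum.resolvent_tendsto_cobounded J).comp coe_tendsto_cobounded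

lemma op_zero_of_bound {A J : OpA} {c : ℝ}
    (hcof : ∀ᶠ t : ℝ in atTop, ‖A‖ ≤ c * ‖resolvent J ((t : ℂ))‖) : A = 0 := by
  have h2 : Tendsto (fun t : ℝ => c * ‖resolvent J ((t : ℂ))‖) atTop (𝓝 0) := by
    simpa using ((res_tendsto J).norm.const_mul c)
  have h3 : ‖A‖ ≤ 0 := ge_of_tendsto h2 hcof
  simpa using norm_le_zero_iff.mp h3

lemma eventually_admissible {T : Polynomial ℝ} (hd : 2 ≤ T.natDegree) (J Jt : OpA) :
    ∀ᶠ t : ℝ in atTop,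
      ((t : ℂ) ∉ spectrum ℂ J ∧ (Tc T).eval ((t : ℂ)) ∉ spectrum ℂ Jt) := by
  have hcoe : Tendsto (fun t : ℝ => ‖((t : ℂ))‖) atTop atTop := by
    simpa using tendsto_abs_atTop_atTop
  have h1 : ∀ᶠ t : ℝ in atTop, ‖J‖ < ‖((t : ℂ))‖ := hcoe.eventually_gt_atTop ‖J‖
  have hdeg : 0 < (Tc T).degree := by
    rw [Tc, degree_map_eq_of_injective (algebraMap ℝ ℂ).injective]
    exact natDegree_pos_iff_degree_pos.mp (by omega)
  have h2 : Tendsto (fun t : ℝ => ‖(Tc T).eval ((t : ℂ))‖) atTop atTop :=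
    Polynomial.tendsto_norm_atTop (Tc T) hdeg hcoe
  filter_upwards [h1, h2.eventually_gt_atTop ‖Jt‖] with t ht1 ht2
  constructor
  · exact fun hmem => absurd (spectrum.norm_le_norm_of_mem hmem) (not_le.mpr ht1)
  · exact fun hmem => absurd (spectrum.norm_le_norm_of_mem hmem) (not_le.mpr ht2)

lemma poly_zero_of_tendsto {Q : Polynomial ℂ}
    (h : Tendsto (fun t : ℝ => Q.eval ((t : ℂ))) atTop (𝓝 0)) : Q = 0 := by
  rcases le_or_gt Q.degree 0 with hdeg | hdeg
  · have hc : Q = Polynomial.C (Q.coeff 0) := eq_C_of_degree_le_zero hdeg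
    have h0 : Q.coeff 0 = 0 := by
      refine tendsto_nhds_unique (f := fun t : ℝ => Q.eval ((t : ℂ))) ?_ h
      rw [hc]
      simpa using tendsto_const_nhds
    rw [hc, h0, map_zero]
  · exfalso
    have hcoe : Tendsto (fun t : ℝ => ‖((t : ℂ))‖) atTop atTop := by
      simpa using tendsto_abs_atTop_atTop
    have h2 : Tendsto (fun t : ℝ => ‖Q.eval ((t : ℂ))‖) atTop atTop :=
      Polynomial.tendsto_norm_atTop Q hdeg hcoe
    exact not_tendsto_atTop_of_tendsto_nhds (by simpa using h.norm) h2

end REaux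

open REaux Filter Topology in
set_option maxHeartbeats 2000000 in
/-- polynomial form of the Renormalization Equation. -/
theorem renormalization_equation_polynomial_form
    (T : Polynomial ℝ) (hd : 2 ≤ T.natDegree)
    (ε : ℤ) (hε0 : 0 ≤ ε) (hε1 : ε ≤ (T.natDegree : ℤ) - 1)
    (J Jt : H2 →L[ℂ] H2) (hJ : IsJacobiOp J) (hJt : IsJacobiOp Jt)
    (V : H2 →L[ℂ] H2) (hV : IsVmap (T.natDegree : ℤ) ε V) :
    SolvesRE (T.natDegree : ℤ) ε T J Jt ↔
      ((adjoint V) ∘L (Polynomial.aeval J (Tc T)) = Jt ∘L (adjoint V) ∧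
        ∀ z : ℂ, (adjoint V) ∘L (Polynomial.aeval J (Dz T z)) ∘L V
          = (((Tc (derivative T)).eval z) / (T.natDegree : ℂ)) • (1 : H2 →L[ℂ] H2)) := by
  classical
  obtain ⟨p0, q0, hJsa, -⟩ := hJ
  obtain ⟨E, hE⟩ := exists_cofactor T
  have hadjJ : ContinuousLinearMap.adjoint J = J := by
    rw [← ContinuousLinearMap.star_eq_adjoint]; exact hJsa
  constructor
  · -- forward direction
    intro hRE
    set A : REaux.OpA := aeval J (Tc T) with hA
    set Vs : REaux.OpA := ContinuousLinearMap.adjoint V with hVsdef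
    set C0 : REaux.OpA := Jt * Vs - Vs * A with hC0def
    have hre : ∀ z : ℂ, z ∉ spectrum ℂ J → (Tc T).eval z ∉ spectrum ℂ Jt →
        Vs * (resolvent J z * V)
          = ((Tc (derivative T)).eval z / (T.natDegree : ℂ)) • resolvent Jt ((Tc T).eval z) := by
      intro z hz hzt
      have h := hRE V hV z hz hzt
      push_cast at h
      exact h
    have step1 : ∀ z : ℂ, z ∉ spectrum ℂ J → (Tc T).eval z ∉ spectrum ℂ Jt →
        Vs * (aeval J (Dz T z) * V)
            - ((Tc (derivative T)).eval z / (T.natDegree : ℂ)) • (1 : REaux.OpA)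
          = C0 * (resolvent J z * V) := by
      intro z hz hzt
      have h1 : Vs * (aeval J (Dz T z) * V)
          = (Tc T).eval z • (Vs * (resolvent J z * V))
              - Vs * (A * (resolvent J z * V)) := by
        rw [Dz_res hE hz, ← hA]
        simp only [sub_mul, mul_sub, ← Algebra.smul_def, smul_mul_assoc, mul_smul_comm,
          mul_assoc]
      have h2 : ((Tc (derivative T)).eval z / (T.natDegree : ℂ)) • (1 : REaux.OpA)
          = (Tc T).eval z • (Vs * (resolvent J z * V))
              - Jt * (Vs * (resolvent J z * V)) := by
        calc ((Tc (derivative T)).eval z / (T.natDegree : ℂ)) • (1 : REaux.OpA)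
            = ((Tc (derivative T)).eval z / (T.natDegree : ℂ)) •
                ((algebraMap ℂ REaux.OpA ((Tc T).eval z) - Jt)
                  * resolvent Jt ((Tc T).eval z)) := by rw [res_right hzt]
          _ = (algebraMap ℂ REaux.OpA ((Tc T).eval z) - Jt) *
                (((Tc (derivative T)).eval z / (T.natDegree : ℂ)) •
                  resolvent Jt ((Tc T).eval z)) := by rw [mul_smul_comm]
          _ = (algebraMap ℂ REaux.OpA ((Tc T).eval z) - Jt) *
                (Vs * (resolvent J z * V)) := by rw [← hre z hz hzt]
          _ = (Tc T).eval z • (Vs * (resolvent J z * V))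
                - Jt * (Vs * (resolvent J z * V)) := by
              simp only [sub_mul, ← Algebra.smul_def]
      rw [h1, h2, hC0def]
      simp only [sub_mul, mul_assoc]
      abel
    have key : ∀ u v : H2, ∀ z : ℂ,
        (inner ℂ u ((Vs * (aeval J (Dz T z) * V)) v) : ℂ)
          = ((Tc (derivative T)).eval z / (T.natDegree : ℂ)) * (inner ℂ u v : ℂ) := by
      intro u v
      set Q : Polynomial ℂ :=
        (∑ j ∈ Finset.range (E.natDegree + 1),
            Polynomial.C ((inner ℂ u ((Vs * (aeval J (E.coeff j) * V)) v) : ℂ)) * X ^ j)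
          - Polynomial.C (((T.natDegree : ℂ))⁻¹ * (inner ℂ u v : ℂ)) * Tc (derivative T)
        with hQdef
      have hQeval : ∀ z : ℂ, Q.eval z
          = (inner ℂ u ((Vs * (aeval J (Dz T z) * V)) v) : ℂ)
            - ((Tc (derivative T)).eval z / (T.natDegree : ℂ)) * (inner ℂ u v : ℂ) := by
        intro z
        have hexp : Vs * (aeval J (Dz T z) * V)
            = ∑ j ∈ Finset.range (E.natDegree + 1),
                z ^ j • (Vs * (aeval J (E.coeff j) * V)) := by
          rw [Dz_eq hE z, aeval_evalC, Finset.sum_mul, Finset.mul_sum]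
          exact Finset.sum_congr rfl fun j _ => by rw [smul_mul_assoc, mul_smul_comm]
        rw [hQdef, hexp]
        simp only [eval_sub, eval_finset_sum, eval_mul, eval_C, eval_pow, eval_X,
          ContinuousLinearMap.sum_apply, ContinuousLinearMap.smul_apply, inner_sum,
          inner_smul_right]
        congr 1
        · exact Finset.sum_congr rfl fun j _ => mul_comm _ _
        · ring
      have hQ0 : Q = 0 := by
        apply poly_zero_of_tendsto
        rw [tendsto_zero_iff_norm_tendsto_zero]
        have hb : ∀ᶠ t : ℝ in atTop, ‖Q.eval ((t : ℂ))‖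
            ≤ (‖u‖ * ‖C0‖ * ‖V‖ * ‖v‖) * ‖resolvent J ((t : ℂ))‖ := by
          filter_upwards [eventually_admissible hd J Jt] with t ht
          obtain ⟨ht1, ht2⟩ := ht
          have e2 : Q.eval ((t : ℂ))
              = (inner ℂ u ((C0 * (resolvent J ((t : ℂ)) * V)) v) : ℂ) := by
            rw [hQeval, ← step1 _ ht1 ht2]
            simp only [ContinuousLinearMap.sub_apply, ContinuousLinearMap.smul_apply,
              ContinuousLinearMap.one_apply, inner_sub_right, inner_smul_right]
          rw [e2]
          have b1 : ‖(C0 * (resolvent J ((t : ℂ)) * V)) v‖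
              ≤ ‖C0‖ * (‖resolvent J ((t : ℂ))‖ * (‖V‖ * ‖v‖)) := by
            calc ‖(C0 * (resolvent J ((t : ℂ)) * V)) v‖
                ≤ ‖C0 * (resolvent J ((t : ℂ)) * V)‖ * ‖v‖ :=
                  ContinuousLinearMap.le_opNorm _ v
              _ ≤ (‖C0‖ * ‖resolvent J ((t : ℂ)) * V‖) * ‖v‖ := by
                  exact mul_le_mul_of_nonneg_right (norm_mul_le _ _) (norm_nonneg _)
              _ ≤ (‖C0‖ * (‖resolvent J ((t : ℂ))‖ * ‖V‖)) * ‖v‖ := by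
                  refine mul_le_mul_of_nonneg_right ?_ (norm_nonneg _)
                  exact mul_le_mul_of_nonneg_left (norm_mul_le _ _) (norm_nonneg _)
              _ = ‖C0‖ * (‖resolvent J ((t : ℂ))‖ * (‖V‖ * ‖v‖)) := by ring
          calc ‖(inner ℂ u ((C0 * (resolvent J ((t : ℂ)) * V)) v) : ℂ)‖
              ≤ ‖u‖ * ‖(C0 * (resolvent J ((t : ℂ)) * V)) v‖ := norm_inner_le_norm _ _
            _ ≤ ‖u‖ * (‖C0‖ * (‖resolvent J ((t : ℂ))‖ * (‖V‖ * ‖v‖))) := by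
                exact mul_le_mul_of_nonneg_left b1 (norm_nonneg _)
            _ = (‖u‖ * ‖C0‖ * ‖V‖ * ‖v‖) * ‖resolvent J ((t : ℂ))‖ := by ring
        have hc : Tendsto (fun t : ℝ =>
            (‖u‖ * ‖C0‖ * ‖V‖ * ‖v‖) * ‖resolvent J ((t : ℂ))‖) atTop (𝓝 0) := by
          simpa using ((res_tendsto J).norm.const_mul (‖u‖ * ‖C0‖ * ‖V‖ * ‖v‖))
        exact squeeze_zero' (Eventually.of_forall fun t => norm_nonneg _) hb hc
      intro z
      have h0 : Q.eval z = 0 := by rw [hQ0, eval_zero]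
      rw [hQeval z] at h0
      exact sub_eq_zero.mp h0
    have hii : ∀ z : ℂ, Vs * (aeval J (Dz T z) * V)
        = ((Tc (derivative T)).eval z / (T.natDegree : ℂ)) • (1 : REaux.OpA) := by
      intro z
      apply op_ext_inner
      intro j k
      rw [key (eB j) (eB k) z]
      simp [inner_smul_right]
    have hCRV : ∀ z : ℂ, z ∉ spectrum ℂ J → (Tc T).eval z ∉ spectrum ℂ Jt →
        C0 * (resolvent J z * V) = 0 := by
      intro z hz hzt
      have h := step1 z hz hzt
      rw [hii z] at h
      simpa using h.symm
    have hGstep : ∀ n : ℕ,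
        (∀ z : ℂ, z ∉ spectrum ℂ J → (Tc T).eval z ∉ spectrum ℂ Jt →
          C0 * (J ^ n * (resolvent J z * V)) = 0) →
        (C0 * (J ^ n * V) = 0 ∧
          ∀ z : ℂ, z ∉ spectrum ℂ J → (Tc T).eval z ∉ spectrum ℂ Jt →
            C0 * (J ^ (n + 1) * (resolvent J z * V)) = 0) := by
      intro n hn
      have hkey : ∀ z : ℂ, z ∉ spectrum ℂ J → (Tc T).eval z ∉ spectrum ℂ Jt →
          C0 * (J ^ (n + 1) * (resolvent J z * V)) = -(C0 * (J ^ n * V)) := by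
        intro z hz hzt
        have e1 : (J : REaux.OpA) ^ (n + 1) * (resolvent J z * V)
            = J ^ n * ((z • resolvent J z - 1) * V) := by
          rw [pow_succ, mul_assoc, ← mul_assoc J _ V, ← JR hz, mul_assoc]
        rw [e1]
        have e2 : (J : REaux.OpA) ^ n * ((z • resolvent J z - 1) * V)
            = z • (J ^ n * (resolvent J z * V)) - J ^ n * V := by
          simp only [sub_mul, mul_sub, one_mul, smul_mul_assoc, mul_smul_comm]
        rw [e2, mul_sub, mul_smul_comm, ← mul_assoc, mul_assoc C0, hn z hz hzt]
        simp
      have h0 : C0 * (J ^ n * V) = 0 := by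
        apply op_zero_of_bound (J := J) (c := ‖C0‖ * ‖(J : REaux.OpA) ^ (n + 1)‖ * ‖V‖)
        filter_upwards [eventually_admissible hd J Jt] with t ht
        obtain ⟨ht1, ht2⟩ := ht
        have e3 : ‖C0 * ((J : REaux.OpA) ^ n * V)‖
            = ‖C0 * (J ^ (n + 1) * (resolvent J ((t : ℂ)) * V))‖ := by
          rw [hkey _ ht1 ht2, norm_neg]
        rw [e3]
        calc ‖C0 * ((J : REaux.OpA) ^ (n + 1) * (resolvent J ((t : ℂ)) * V))‖
            ≤ ‖C0‖ * ‖(J : REaux.OpA) ^ (n + 1) * (resolvent J ((t : ℂ)) * V)‖ :=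
              norm_mul_le _ _
          _ ≤ ‖C0‖ * (‖(J : REaux.OpA) ^ (n + 1)‖ * ‖resolvent J ((t : ℂ)) * V‖) :=
              mul_le_mul_of_nonneg_left (norm_mul_le _ _) (norm_nonneg _)
          _ ≤ ‖C0‖ * (‖(J : REaux.OpA) ^ (n + 1)‖ * (‖resolvent J ((t : ℂ))‖ * ‖V‖)) := by
              refine mul_le_mul_of_nonneg_left ?_ (norm_nonneg _)
              exact mul_le_mul_of_nonneg_left (norm_mul_le _ _) (norm_nonneg _)
          _ = ‖C0‖ * ‖(J : REaux.OpA) ^ (n + 1)‖ * ‖V‖ * ‖resolvent J ((t : ℂ))‖ := by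
              ring
      refine ⟨h0, fun z hz hzt => ?_⟩
      rw [hkey z hz hzt, h0, neg_zero]
    have hGall : ∀ n : ℕ, ∀ z : ℂ, z ∉ spectrum ℂ J → (Tc T).eval z ∉ spectrum ℂ Jt →
        C0 * (J ^ n * (resolvent J z * V)) = 0 := by
      intro n
      induction n with
      | zero =>
        intro z hz hzt
        simpa using hCRV z hz hzt
      | succ k ih => exact (hGstep k ih).2
    have hCJnV : ∀ n : ℕ, C0 * (J ^ n * V) = 0 := fun n => (hGstep n (hGall n)).1
    have hC00 : C0 = 0 := by
      set K0 : Submodule ℂ H2 :=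
        Submodule.span ℂ (⋃ n : ℕ, Set.range fun x : H2 => (J ^ n) (V x)) with hK0
      set K := K0.topologicalClosure with hK
      haveI : CompleteSpace K := K0.isClosed_topologicalClosure.completeSpace_coe
      have hgen : ∀ y ∈ (⋃ n : ℕ, Set.range fun x : H2 => (J ^ n) (V x)), C0 y = 0 := by
        intro y hy
        simp only [Set.mem_iUnion, Set.mem_range] at hy
        obtain ⟨n, x, rfl⟩ := hy
        have h := congrFun (congrArg (DFunLike.coe) (hCJnV n)) x
        simpa [ContinuousLinearMap.mul_apply] using h
      have hK0ker : K0 ≤ LinearMap.ker (C0 : H2 →ₗ[ℂ] H2) :=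
        Submodule.span_le.mpr fun y hy => hgen y hy
      have hKker : K ≤ LinearMap.ker (C0 : H2 →ₗ[ℂ] H2) :=
        Submodule.topologicalClosure_minimal K0 hK0ker (ContinuousLinearMap.isClosed_ker C0)
      have hJK0 : ∀ y ∈ K0, J y ∈ K0 := by
        intro y hy
        have hmap : Submodule.map (J : H2 →ₗ[ℂ] H2) K0 ≤ K0 := by
          rw [hK0, Submodule.map_span, Submodule.span_le]
          rintro w ⟨y', hy', rfl⟩
          simp only [Set.mem_iUnion, Set.mem_range] at hy'
          obtain ⟨n, x, rfl⟩ := hy'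
          apply Submodule.subset_span
          refine Set.mem_iUnion.mpr ⟨n + 1, ⟨x, ?_⟩⟩
          rw [pow_succ']
          rfl
        exact hmap ⟨y, hy, rfl⟩
      have hJK : ∀ y ∈ K, J y ∈ K := by
        intro y hy
        have hyc : y ∈ closure (K0 : Set H2) := hy
        have h1 : J y ∈ closure ((J : H2 → H2) '' (K0 : Set H2)) :=
          image_closure_subset_closure_image J.continuous ⟨y, hyc, rfl⟩
        have h2 : closure ((J : H2 → H2) '' (K0 : Set H2)) ⊆ closure (K0 : Set H2) := by
          apply closure_mono
          rintro w ⟨y', hy', rfl⟩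
          exact hJK0 y' hy'
        exact h2 h1
      have hVmem : ∀ u : H2, V u ∈ K := by
        intro u
        apply K0.le_topologicalClosure
        apply Submodule.subset_span
        refine Set.mem_iUnion.mpr ⟨0, ⟨u, ?_⟩⟩
        simp
      have hVsperp : ∀ x ∈ Kᗮ, Vs x = 0 := by
        intro x hx
        rw [Submodule.mem_orthogonal] at hx
        have h2 : (inner ℂ (Vs x) (Vs x) : ℂ) = 0 := by
          rw [hVsdef, ContinuousLinearMap.adjoint_inner_right]
          exact hx _ (hVmem _)
        exact inner_self_eq_zero.mp h2
      have hperpJ : ∀ x ∈ Kᗮ, J x ∈ Kᗮ := by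
        intro x hx
        rw [Submodule.mem_orthogonal] at hx ⊢
        intro u hu
        have h3 : (inner ℂ u (J x) : ℂ) = inner ℂ (J u) x := by
          conv_rhs => rw [← hadjJ]
          rw [ContinuousLinearMap.adjoint_inner_left]
        rw [h3]
        exact hx (J u) (hJK u hu)
      have hperpJn : ∀ x ∈ Kᗮ, ∀ n : ℕ, (J ^ n) x ∈ Kᗮ := by
        intro x hx n
        induction n with
        | zero => simpa using hx
        | succ k ih =>
          have : (J ^ (k + 1)) x = J ((J ^ k) x) := by
            rw [pow_succ']
            rfl
          rw [this]
          exact hperpJ _ ih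
      have hperpA : ∀ x ∈ Kᗮ, A x ∈ Kᗮ := by
        intro x hx
        rw [hA, aeval_eq_sum_range]
        simp only [ContinuousLinearMap.coe_sum', Finset.sum_apply,
          ContinuousLinearMap.smul_apply]
        exact Submodule.sum_mem _ fun i _ => Submodule.smul_mem _ _ (hperpJn x hx i)
      have hperpC0 : ∀ x ∈ Kᗮ, C0 x = 0 := by
        intro x hx
        rw [hC0def]
        simp only [ContinuousLinearMap.sub_apply, ContinuousLinearMap.mul_apply]
        rw [hVsperp x hx, map_zero, hVsperp _ (hperpA x hx), sub_zero]
      refine ContinuousLinearMap.ext fun x => ?_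
      obtain ⟨y, hy, w', hw', rfl⟩ := K.exists_add_mem_mem_orthogonal x
      have hy0 : C0 y = 0 := hKker hy
      rw [map_add, hy0, hperpC0 w' hw', zero_add]
      simp
    refine ⟨?_, fun z => hii z⟩
    have h4 : Jt * Vs = Vs * A := sub_eq_zero.mp (by rw [← hC0def]; exact hC00)
    exact h4.symm
  · -- backward direction
    rintro ⟨h1, h2⟩ V' hV' z hz hzt
    have hVV : V' = V := op_ext fun k => by rw [hV' k, hV k]
    rw [hVV]
    have hDz := Dz_res hE hz (J := J)
    have e1 : (ContinuousLinearMap.adjoint V) * (aeval J (Dz T z) * V)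
        = ((Tc (derivative T)).eval z / (T.natDegree : ℂ)) • (1 : REaux.OpA) := h2 z
    have e2 : (Tc T).eval z • (ContinuousLinearMap.adjoint V * (resolvent J z * V))
          - Jt * (ContinuousLinearMap.adjoint V * (resolvent J z * V))
        = ((Tc (derivative T)).eval z / (T.natDegree : ℂ)) • (1 : REaux.OpA) := by
      rw [← e1, hDz]
      have h1' : (Jt : REaux.OpA) * ContinuousLinearMap.adjoint V
          = ContinuousLinearMap.adjoint V * aeval J (Tc T) := h1.symm
      calc (Tc T).eval z • (ContinuousLinearMap.adjoint V * (resolvent J z * V))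
            - Jt * (ContinuousLinearMap.adjoint V * (resolvent J z * V))
          = (Tc T).eval z • (ContinuousLinearMap.adjoint V * (resolvent J z * V))
            - (Jt * ContinuousLinearMap.adjoint V) * (resolvent J z * V) := by
            rw [mul_assoc]
        _ = (Tc T).eval z • (ContinuousLinearMap.adjoint V * (resolvent J z * V))
            - (ContinuousLinearMap.adjoint V * aeval J (Tc T)) * (resolvent J z * V) := by
            rw [h1']
        _ = ContinuousLinearMap.adjoint V *
              ((algebraMap ℂ REaux.OpA ((Tc T).eval z) - aeval J (Tc T))
                * resolvent J z * V) := by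
            simp only [sub_mul, mul_sub, ← Algebra.smul_def, smul_mul_assoc, mul_smul_comm,
              mul_assoc]
    have e3 : (algebraMap ℂ REaux.OpA ((Tc T).eval z) - Jt) *
          (ContinuousLinearMap.adjoint V * (resolvent J z * V))
        = ((Tc (derivative T)).eval z / (T.natDegree : ℂ)) • (1 : REaux.OpA) := by
      rw [sub_mul, ← Algebra.smul_def]
      exact e2
    have e4 : ContinuousLinearMap.adjoint V * (resolvent J z * V)
        = ((Tc (derivative T)).eval z / (T.natDegree : ℂ)) • resolvent Jt ((Tc T).eval z) := by
      calc ContinuousLinearMap.adjoint V * (resolvent J z * V)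
          = (resolvent Jt ((Tc T).eval z) * (algebraMap ℂ REaux.OpA ((Tc T).eval z) - Jt)) *
              (ContinuousLinearMap.adjoint V * (resolvent J z * V)) := by
            rw [res_left hzt, one_mul]
        _ = resolvent Jt ((Tc T).eval z) * ((algebraMap ℂ REaux.OpA ((Tc T).eval z) - Jt) *
              (ContinuousLinearMap.adjoint V * (resolvent J z * V))) := by
            rw [mul_assoc]
        _ = resolvent Jt ((Tc T).eval z) *
              (((Tc (derivative T)).eval z / (T.natDegree : ℂ)) • (1 : REaux.OpA)) := by
            rw [e3]
        _ = ((Tc (derivative T)).eval z / (T.natDegree : ℂ)) • resolvent Jt ((Tc T).eval z) := by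
            rw [mul_smul_comm, mul_one]
    show ContinuousLinearMap.adjoint V * (resolvent J z * V)
        = ((Tc (derivative T)).eval z / (((T.natDegree : ℤ) : ℤ) : ℂ)) • resolvent Jt ((Tc T).eval z)
    push_cast
    exact e4
end
end

section
/- Let T be a monic real polynomial of degree d ≥ 2 whose derivative T' has d−1 distinct real roots c₁, ..., c_{d−1} (so T''(cᵢ) ≠ 0 for each i), and let F be any monic real polynomial of degree d. Then there exists a real number a such that, as an identity of polynomials, F(z) = (z − a)·T'(z)/d + Σ_{i=1}^{d−1} (F(cᵢ)/T''(cᵢ)) · T'(z)/(z − cᵢ), where T'(z)/(z − cᵢ) denotes the polynomial quotient of T'(z) by (z − cᵢ). -/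
/-!
`T'/d` is monic of degree `d - 1` and vanishes at the `d - 1` distinct points `cᵢ`, which are
therefore simple zeros: `T''(cᵢ) ≠ 0`. Since `T'/(z - cᵢ)` vanishes at every `cⱼ` with `j ≠ i` and
takes the value `T''(cᵢ)` at `cᵢ`, the sum over `i` is the Lagrange interpolant of `F` at the
critical points. Hence `F` minus the sum is monic of degree `d` and vanishes at all `cᵢ`, so it is
divisible by `T'/d`, with a monic linear quotient `z - a`.
-/

open Polynomial

namespace Polynomial

section CommRing

variable {R : Type*} [CommRing R]

theorem eval_divByMonic_X_sub_C_self (f : R[X]) (a : R) :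
    (f /ₘ (X - C a)).eval a = f.derivative.eval a := by
  simpa using
    congrArg (eval a) (divByMonic_add_X_sub_C_mul_derivative_divByMonic_eq_derivative f a)

theorem exists_eq_X_sub_C_mul_of_dvd [Nontrivial R] {p q : R[X]} (hp : p.Monic) (hq : q.Monic)
    (hdeg : q.natDegree = p.natDegree + 1) (hdvd : p ∣ q) : ∃ a, q = (X - C a) * p := by
  obtain ⟨r, rfl⟩ := hdvd
  have hr : r.Monic := hp.of_mul_monic_left hq
  have hr_deg : r.natDegree = 1 := by
    rw [hp.natDegree_mul hr] at hdeg
    omega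
  refine ⟨-r.coeff 0, ?_⟩
  rw [map_neg, sub_neg_eq_add, ← hr.eq_X_add_C hr_deg, mul_comm]

variable [IsDomain R] {ι : Type*} [Fintype ι] {c : ι → R}

theorem isRoot_divByMonic_X_sub_C_of_ne {f : R[X]} {a b : R} (ha : f.IsRoot a) (hb : f.IsRoot b)
    (hab : a ≠ b) : (f /ₘ (X - C a)).IsRoot b := by
  rw [← mul_divByMonic_eq_iff_isRoot.2 ha, IsRoot, eval_mul] at hb
  simpa [sub_ne_zero.2 hab.symm] using hb

theorem eval_derivative_ne_zero_of_injective {f : R[X]} (hf : f ≠ 0)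
    (hdeg : f.natDegree ≤ Fintype.card ι) (hc : Function.Injective c)
    (hroot : ∀ i, f.IsRoot (c i)) (i : ι) : f.derivative.eval (c i) ≠ 0 := by
  intro hi
  have hq : ∀ j, (f /ₘ (X - C (c i))).eval (c j) = 0 := fun j => by
    rcases eq_or_ne i j with rfl | hij
    · rwa [eval_divByMonic_X_sub_C_self]
    · exact isRoot_divByMonic_X_sub_C_of_ne (hroot i) (hroot j) (hc.ne hij)
  have hcard : 0 < Fintype.card ι := Fintype.card_pos_iff.2 ⟨i⟩
  have hq_zero : f /ₘ (X - C (c i)) = 0 := by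
    refine eq_zero_of_natDegree_lt_card_of_eval_eq_zero _ hc hq ?_
    rw [natDegree_divByMonic _ (monic_X_sub_C _), natDegree_X_sub_C]
    omega
  exact hf (by rw [← mul_divByMonic_eq_iff_isRoot.2 (hroot i), hq_zero, mul_zero])

theorem Monic.dvd_of_eval_eq_zero {p f : R[X]} (hp : p.Monic)
    (hdeg : p.natDegree ≤ Fintype.card ι) (hc : Function.Injective c)
    (hp_root : ∀ i, p.eval (c i) = 0) (hf_root : ∀ i, f.eval (c i) = 0) : p ∣ f := by
  rcases eq_or_ne p 1 with rfl | hp_one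
  · exact one_dvd f
  rw [← modByMonic_eq_zero_iff_dvd hp]
  refine eq_zero_of_natDegree_lt_card_of_eval_eq_zero _ hc (fun i => ?_)
    ((natDegree_modByMonic_lt f hp hp_one).trans_le hdeg)
  simp [modByMonic_eq_sub_mul_div f p, hp_root, hf_root]

end CommRing

theorem eval_sum_C_div_mul_divByMonic_X_sub_C {K : Type*} [Field K] {ι : Type*} [Fintype ι]
    {f : K[X]} {c : ι → K} (hc : Function.Injective c) (hroot : ∀ i, f.IsRoot (c i))
    (hsimple : ∀ i, f.derivative.eval (c i) ≠ 0) (v : ι → K) (j : ι) :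
    (∑ i, C (v i / f.derivative.eval (c i)) * (f /ₘ (X - C (c i)))).eval (c j) = v j := by
  rw [eval_finsetSum, Finset.sum_eq_single j]
  · rw [eval_mul, eval_C, eval_divByMonic_X_sub_C_self, div_mul_cancel₀ _ (hsimple j)]
  · intro i _ hij
    rw [eval_mul, isRoot_divByMonic_X_sub_C_of_ne (hroot i) (hroot j) (hc.ne hij), mul_zero]
  · simp

end Polynomial

/-- partial-fraction style decomposition of a monic degree-`d` polynomial
along the critical points of `T`:
`F(z) = (z - a)·T'(z)/d + Σᵢ (F(cᵢ)/T''(cᵢ)) · T'(z)/(z - cᵢ)`. -/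
theorem monic_decomposition_along_critical_points
    (d : ℕ) (hd : 2 ≤ d) (T : Polynomial ℝ) (hmonic : T.Monic) (hdeg : T.natDegree = d)
    (c : Fin (d - 1) → ℝ) (hinj : Function.Injective c)
    (hroot : ∀ i, T.derivative.eval (c i) = 0)
    (F : Polynomial ℝ) (hFmonic : F.Monic) (hFdeg : F.natDegree = d) :
    ∃ a : ℝ, F = (X - C a) * (C ((d : ℝ))⁻¹ * T.derivative) +
      ∑ i : Fin (d - 1),
        C (F.eval (c i) / (T.derivative.derivative.eval (c i))) *
          (T.derivative /ₘ (X - C (c i))) := by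
  set P := C ((d : ℝ))⁻¹ * T.derivative
  set G := ∑ i : Fin (d - 1),
    C (F.eval (c i) / (T.derivative.derivative.eval (c i))) * (T.derivative /ₘ (X - C (c i)))
  have hd0 : (d : ℝ) ≠ 0 := Nat.cast_ne_zero.2 (by omega)
  have hT'_deg : T.derivative.natDegree = d - 1 := by simp [hdeg]
  have hP_deg : P.natDegree = d - 1 := by rw [natDegree_C_mul (inv_ne_zero hd0), hT'_deg]
  have hP_monic : P.Monic := by simp [P, Monic, hmonic.leadingCoeff, hdeg, hd0]
  have hT'_ne : T.derivative ≠ 0 := derivative_ne_zero.2 (by omega)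
  have hG_eval : ∀ i, G.eval (c i) = F.eval (c i) :=
    eval_sum_C_div_mul_divByMonic_X_sub_C hinj hroot
      (eval_derivative_ne_zero_of_injective hT'_ne (by simp [hT'_deg]) hinj hroot) _
  have hG_deg : G.natDegree < d := by
    refine (natDegree_sum_le_of_forall_le _ _ fun i _ => (natDegree_C_mul_le _ _).trans ?_).trans_lt
      (show d - 2 < d by omega)
    rw [natDegree_divByMonic _ (monic_X_sub_C _), natDegree_X_sub_C, hT'_deg]
    omega
  have hFG_monic : (F - G).Monic := hFmonic.sub_of_left (degree_lt_degree (by omega))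
  have hFG_deg : (F - G).natDegree = P.natDegree + 1 := by
    rw [natDegree_sub_eq_left_of_natDegree_lt (by omega), hFdeg, hP_deg]
    omega
  have hdvd : P ∣ F - G :=
    hP_monic.dvd_of_eval_eq_zero (by simp [hP_deg]) hinj (by simp [P, hroot])
      (by simp [hG_eval])
  obtain ⟨a, ha⟩ := exists_eq_X_sub_C_mul_of_dvd hP_monic hFG_monic hFG_deg hdvd
  exact ⟨a, by rw [← ha, sub_add_cancel]⟩
end
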